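/- arXiv:2404.13117 — 5 statements merged into one kernel-verified Lean document; each statement's English description precedes it below -/
import Mathlib

section
/- For every t ≥ 0, the function x ↦ F*(t,x) is a cumulative distribution function on ℝ: it is continuous and nondecreasing in x, with lim_{x→−∞} F*(t,x) = 0 and lim_{x→+∞} F*(t,x) = 1. -/
/-!
Substituting `u = e^{-βy}` turns `∫ exp (-γ y - e^{-β y}) dy` into
`β⁻¹ ∫₀^∞ e^{-u} u^{γ/β - 1} du = Γ(γ/β) / β`, so the prefactor `γ / Γ(1 + γ/β) = β / Γ(γ/β)`
normalizes the integrand of `F*` to a probability density. Since `ζ(x,t) - x` does not depend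
on `x`, `F*(t, ·)` is a translate of the distribution function of that density.
-/

open MeasureTheory Filter Set Topology Real

def IsContinuousCDF (F : ℝ → ℝ) : Prop :=
  Continuous F ∧ Monotone F ∧ Tendsto F atBot (𝓝 0) ∧ Tendsto F atTop (𝓝 1)

theorem IsContinuousCDF.comp_add_const {F : ℝ → ℝ} (hF : IsContinuousCDF F) (C : ℝ) :
    IsContinuousCDF fun x => F (x + C) := by
  obtain ⟨hcont, hmono, hbot, htop⟩ := hF
  exact ⟨hcont.comp (continuous_add_const C), hmono.comp (monotone_id.add_const C),
    hbot.comp (tendsto_atBot_add_const_right _ C tendsto_id),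
    htop.comp (tendsto_atTop_add_const_right _ C tendsto_id)⟩

section DistributionFunction

variable {g : ℝ → ℝ}

theorem continuous_integral_Iic (hg : Integrable g) : Continuous fun z => ∫ y in Iic z, g y := by
  have hsplit : ∀ z, ∫ y in Iic z, g y = (∫ y in Iic 0, g y) + ∫ y in (0 : ℝ)..z, g y := fun z => by
    rw [← intervalIntegral.integral_Iic_sub_Iic hg.integrableOn hg.integrableOn]
    ring
  exact (continuous_const.add (hg.continuous_primitive 0)).congr fun z => (hsplit z).symm

theorem monotone_integral_Iic (hg : Integrable g) (hg0 : 0 ≤ g) :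
    Monotone fun z => ∫ y in Iic z, g y := fun _ _ hab =>
  setIntegral_mono_set hg.integrableOn (Eventually.of_forall hg0)
    (Iic_subset_Iic.mpr hab).eventuallyLE

theorem tendsto_integral_Iic_atTop (hg : Integrable g) :
    Tendsto (fun z => ∫ y in Iic z, g y) atTop (𝓝 (∫ y, g y)) :=
  (aecover_Iic tendsto_id).integral_tendsto_of_countably_generated hg

theorem isContinuousCDF_integral_Iic (hg : Integrable g) (hg0 : 0 ≤ g) (hg1 : ∫ y, g y = 1) :
    IsContinuousCDF fun z => ∫ y in Iic z, g y :=
  ⟨continuous_integral_Iic hg, monotone_integral_Iic hg hg0,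
    tendsto_integral_Iic_zero tendsto_id, hg1 ▸ tendsto_integral_Iic_atTop hg⟩

end DistributionFunction

section GammaIntegral

theorem abs_exp_smul_exp_neg_mul_rpow_comp_exp (s x : ℝ) :
    |exp x| • (exp (-exp x) * exp x ^ (s - 1)) = exp (s * x - exp x) := by
  rw [abs_of_pos (exp_pos x), smul_eq_mul, ← exp_mul, ← exp_add, ← exp_add]
  ring_nf

theorem image_univ_exp : exp '' univ = Ioi 0 := by
  rw [image_univ, range_exp]

variable {s : ℝ}

theorem integrable_exp_mul_sub_exp (hs : 0 < s) : Integrable fun x => exp (s * x - exp x) := by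
  have h := (integrableOn_image_iff_integrableOn_abs_deriv_smul MeasurableSet.univ
    (fun x _ => (hasDerivAt_exp x).hasDerivWithinAt) exp_injective.injOn
    (fun u => exp (-u) * u ^ (s - 1))).mp (image_univ_exp ▸ GammaIntegral_convergent hs)
  simpa only [abs_exp_smul_exp_neg_mul_rpow_comp_exp, integrableOn_univ] using h

theorem integral_exp_mul_sub_exp (hs : 0 < s) : ∫ x, exp (s * x - exp x) = Gamma s := by
  have h := integral_image_eq_integral_abs_deriv_smul MeasurableSet.univ
    (fun x _ => (hasDerivAt_exp x).hasDerivWithinAt) exp_injective.injOn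
    (fun u => exp (-u) * u ^ (s - 1))
  rw [image_univ_exp, Measure.restrict_univ] at h
  simp only [abs_exp_smul_exp_neg_mul_rpow_comp_exp] at h
  rw [← h, Gamma_eq_integral hs]

end GammaIntegral

section Gumbel

variable {β γ : ℝ}

theorem exp_neg_mul_sub_exp_neg_mul_eq (hβ : 0 < β) (y : ℝ) :
    exp (-γ * y - exp (-β * y)) = exp (γ / β * (-β * y) - exp (-β * y)) := by
  field_simp

theorem integrable_exp_neg_mul_sub_exp_neg_mul (hβ : 0 < β) (hγ : 0 < γ) :
    Integrable fun y => exp (-γ * y - exp (-β * y)) := by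
  simp only [exp_neg_mul_sub_exp_neg_mul_eq hβ]
  exact (integrable_exp_mul_sub_exp (div_pos hγ hβ)).comp_mul_left' (neg_ne_zero.mpr hβ.ne')

theorem integral_exp_neg_mul_sub_exp_neg_mul (hβ : 0 < β) (hγ : 0 < γ) :
    ∫ y, exp (-γ * y - exp (-β * y)) = Gamma (γ / β) / β := by
  simp only [exp_neg_mul_sub_exp_neg_mul_eq hβ]
  rw [Measure.integral_comp_mul_left (fun x => exp (γ / β * x - exp x)),
    integral_exp_mul_sub_exp (div_pos hγ hβ), inv_neg, abs_neg, abs_of_pos (inv_pos.mpr hβ),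
    smul_eq_mul, inv_mul_eq_div]

noncomputable def gumbelDensity (β γ y : ℝ) : ℝ :=
  γ / Gamma (1 + γ / β) * exp (-γ * y - exp (-β * y))

theorem gumbelDensity_nonneg (hβ : 0 < β) (hγ : 0 < γ) (y : ℝ) : 0 ≤ gumbelDensity β γ y := by
  unfold gumbelDensity
  have : 0 < Gamma (1 + γ / β) := Gamma_pos_of_pos (by positivity)
  positivity

theorem integrable_gumbelDensity (hβ : 0 < β) (hγ : 0 < γ) : Integrable (gumbelDensity β γ) :=
  (integrable_exp_neg_mul_sub_exp_neg_mul hβ hγ).const_mul _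

theorem integral_gumbelDensity (hβ : 0 < β) (hγ : 0 < γ) : ∫ y, gumbelDensity β γ y = 1 := by
  have hs : 0 < γ / β := div_pos hγ hβ
  have hΓ : 0 < Gamma (γ / β) := Gamma_pos_of_pos hs
  unfold gumbelDensity
  rw [integral_const_mul, integral_exp_neg_mul_sub_exp_neg_mul hβ hγ, add_comm,
    Gamma_add_one hs.ne']
  field_simp

end Gumbel

theorem Fstar_is_cdf_general
    (β γ : ℝ) (hβ : 0 < β) (hβγ : β ≤ γ)
    (Θ : ℝ → ℝ)
    (ζ : ℝ → ℝ → ℝ)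
    (hζ : ∀ x t, ζ x t = x + γ⁻¹ * Θ t
      - β⁻¹ * Real.log (1 + ∫ s in (0:ℝ)..t, Real.exp (β * γ⁻¹ * Θ s)))
    (F : ℝ → ℝ → ℝ)
    (hF : ∀ t x, F t x = (γ / Real.Gamma (1 + γ / β))
      * ∫ y in Set.Iic (ζ x t), Real.exp (-γ * y - Real.exp (-β * y)))
    (t : ℝ) :
    Continuous (fun x => F t x) ∧ Monotone (fun x => F t x) ∧
      Tendsto (fun x => F t x) atBot (nhds 0) ∧
      Tendsto (fun x => F t x) atTop (nhds 1) := by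
  have hγ : 0 < γ := hβ.trans_le hβγ
  set C := γ⁻¹ * Θ t - β⁻¹ * log (1 + ∫ s in (0:ℝ)..t, exp (β * γ⁻¹ * Θ s))
  have hFshift : (fun x => F t x) = fun x => ∫ y in Iic (x + C), gumbelDensity β γ y := by
    funext x
    unfold gumbelDensity
    rw [hF, hζ, integral_const_mul, add_sub_assoc]
  rw [hFshift]
  exact (isContinuousCDF_integral_Iic (integrable_gumbelDensity hβ hγ)
    (gumbelDensity_nonneg hβ hγ) (integral_gumbelDensity hβ hγ)).comp_add_const C

/-- For each `t ≥ 0`, `x ↦ F*(t,x)` is a cumulative distribution function: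
continuous, nondecreasing, tending to `0` at `-∞` and to `1` at `+∞`. -/
theorem Fstar_is_cdf
    (β γ : ℝ) (hβ : 0 < β) (hβγ : β ≤ γ)
    (θ : ℝ → ℝ) (hθmeas : Measurable θ) (hθnonneg : ∀ s, 0 ≤ θ s)
    (hθloc : ∀ t : ℝ, IntegrableOn θ (Set.Icc 0 t))
    (Θ : ℝ → ℝ) (hΘ : ∀ t, Θ t = ∫ s in (0:ℝ)..t, θ s)
    (ζ : ℝ → ℝ → ℝ)
    (hζ : ∀ x t, ζ x t = x + γ⁻¹ * Θ t
      - β⁻¹ * Real.log (1 + ∫ s in (0:ℝ)..t, Real.exp (β * γ⁻¹ * Θ s)))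
    (F : ℝ → ℝ → ℝ)
    (hF : ∀ t x, F t x = (γ / Real.Gamma (1 + γ / β))
      * ∫ y in Set.Iic (ζ x t), Real.exp (-γ * y - Real.exp (-β * y)))
    (t : ℝ) (ht : 0 ≤ t) :
    Continuous (fun x => F t x) ∧ Monotone (fun x => F t x) ∧
      Tendsto (fun x => F t x) atBot (nhds 0) ∧
      Tendsto (fun x => F t x) atTop (nhds 1) :=
  Fstar_is_cdf_general β γ hβ hβγ Θ ζ hζ F hF t
end

section
/- ν* is a fixed point of the centered mean-field (McKean–Vlasov) equation: for every continuously differentiable f : ℝ → ℝ with |f'(x)| ≤ 1 for all x, one has ∫ g_f(y) e^{−βy} ν*(dy) = γ⁻¹ ( ∫ e^{−βy} ν*(dy) ) ( ∫ f'(y) ν*(dy) ), all integrals appearing being finite. -/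
/-!
Put `G_κ(t) = exp (-κt - e^{-βt})` (`gumbelKernel β κ`); `ν*` has density `ρ = c G_γ(· - m)` with
`c = γ / Γ(1 + γ/β)` and `m = β⁻¹ Ψ(γ/β)`. Integration by parts gives
`g_f(y) = ∫₀^∞ f'(y+z) e^{-γz} dz`, and Fubini with the shear `(z, y) ↦ (z, z + y)` turns the
left-hand side into `∫ f'(x) (∫₀^∞ e^{-γz} e^{-β(x-z)} ρ(x-z) dz) dx`. The inner integrand is
`c e^{-βm} e^{-γ(x-m)} G_β(x-m-z)`, and `β G_β` is the derivative of `G_0 = exp (-e^{-β·})`, so the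
inner integral is `β⁻¹ e^{-βm} ρ(x)`. The substitution `s = e^{-βt}` gives `∫ G_κ = Γ(κ/β)/β`,
hence `∫ e^{-βy} ρ(y) dy = (γ/β) e^{-βm}`, and both sides equal `β⁻¹ e^{-βm} ∫ f' ρ`.
-/

open MeasureTheory Filter Set Real Topology

noncomputable def gumbelKernel (β κ t : ℝ) : ℝ := exp (-κ * t - exp (-β * t))

lemma gumbelKernel_pos (β κ t : ℝ) : 0 < gumbelKernel β κ t := exp_pos _

@[fun_prop]
lemma continuous_gumbelKernel (β κ : ℝ) : Continuous (gumbelKernel β κ) := by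
  unfold gumbelKernel; fun_prop

lemma exp_mul_gumbelKernel (β κ γ t : ℝ) :
    exp (-γ * t) * gumbelKernel β κ t = gumbelKernel β (κ + γ) t := by
  unfold gumbelKernel; rw [← exp_add]; ring_nf

lemma gumbelKernel_zero (β : ℝ) : gumbelKernel β 0 = fun t => exp (-exp (-β * t)) := by
  ext; simp [gumbelKernel]

lemma hasDerivAt_gumbelKernel_zero (β t : ℝ) :
    HasDerivAt (gumbelKernel β 0) (β * gumbelKernel β β t) t := by
  have hlin : HasDerivAt (fun t => -β * t) (-β) t := by
    simpa using (hasDerivAt_id t).const_mul (-β)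
  rw [gumbelKernel_zero]
  convert hlin.exp.fun_neg.exp using 1
  unfold gumbelKernel
  rw [sub_eq_add_neg, exp_add]; ring

lemma tendsto_gumbelKernel_zero_atBot {β : ℝ} (hβ : 0 < β) :
    Tendsto (gumbelKernel β 0) atBot (𝓝 0) := by
  have h : Tendsto (fun t => -β * t) atBot atTop :=
    tendsto_id.const_mul_atBot_of_neg (neg_lt_zero.mpr hβ)
  rw [gumbelKernel_zero]
  exact tendsto_exp_atBot.comp (tendsto_neg_atTop_atBot.comp (tendsto_exp_atTop.comp h))

lemma abs_deriv_smul_gammaIntegrand {β : ℝ} (hβ : 0 < β) (κ t : ℝ) :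
    |-β * exp (-β * t)| • (exp (-exp (-β * t)) * exp (-β * t) ^ (κ / β - 1))
      = β * gumbelKernel β κ t := by
  rw [smul_eq_mul, abs_mul, abs_neg, abs_of_pos hβ, abs_of_pos (exp_pos _), ← exp_mul,
    gumbelKernel, mul_assoc, ← exp_add, ← exp_add]
  congr 2
  field_simp
  ring

lemma integral_gumbelKernel {β κ : ℝ} (hβ : 0 < β) (hκ : 0 < κ) :
    Integrable (gumbelKernel β κ) ∧ ∫ t, gumbelKernel β κ t = Gamma (κ / β) / β := by
  have hφ' : ∀ t ∈ univ, HasDerivWithinAt (fun t => exp (-β * t)) (-β * exp (-β * t)) univ t :=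
    fun t _ => (((hasDerivAt_id t).const_mul (-β)).exp.congr_deriv
      (by simp [mul_comm])).hasDerivWithinAt
  have hinj : InjOn (fun t => exp (-β * t)) univ := fun a _ b _ h => by
    simpa [hβ.ne'] using exp_injective h
  have himg : (fun t => exp (-β * t)) '' univ = Ioi 0 := by
    rw [image_univ, ← range_exp]
    exact (mul_left_surjective₀ (neg_ne_zero.mpr hβ.ne')).range_comp exp
  have hintegrable := integrableOn_image_iff_integrableOn_abs_deriv_smul MeasurableSet.univ hφ' hinj
    (fun s => exp (-s) * s ^ (κ / β - 1))
  have hintegral := integral_image_eq_integral_abs_deriv_smul MeasurableSet.univ hφ' hinj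
    (fun s => exp (-s) * s ^ (κ / β - 1))
  simp only [himg, abs_deriv_smul_gammaIntegrand hβ, integrableOn_univ, Measure.restrict_univ,
    integral_const_mul, ← Gamma_eq_integral (div_pos hκ hβ)] at hintegrable hintegral
  refine ⟨(hintegrable.mp (GammaIntegral_convergent (div_pos hκ hβ))).const_mul β⁻¹ |>.congr ?_, ?_⟩
  · filter_upwards with t; field_simp
  · field_simp; linarith

lemma integral_Ioi_gumbelKernel_self_sub {β : ℝ} (hβ : 0 < β) (t : ℝ) :
    IntegrableOn (fun u => gumbelKernel β β (t - u)) (Ioi 0) ∧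
    ∫ u in Ioi 0, gumbelKernel β β (t - u) = β⁻¹ * gumbelKernel β 0 t := by
  have hderiv : ∀ u ∈ Ici (0 : ℝ),
      HasDerivAt (fun u => -β⁻¹ * gumbelKernel β 0 (t - u)) (gumbelKernel β β (t - u)) u := by
    intro u _
    refine (((hasDerivAt_gumbelKernel_zero β (t - u)).comp_const_sub t u).const_mul
      (-β⁻¹)).congr_deriv ?_
    field_simp
  have hnonneg : ∀ u ∈ Ioi (0 : ℝ), 0 ≤ gumbelKernel β β (t - u) :=
    fun u _ => (gumbelKernel_pos _ _ _).le
  have hlim : Tendsto (fun u => -β⁻¹ * gumbelKernel β 0 (t - u)) atTop (𝓝 0) := by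
    have hsub : Tendsto (fun u => t - u) atTop atBot := by
      simpa only [sub_eq_add_neg] using tendsto_atBot_add_const_left _ t tendsto_neg_atTop_atBot
    simpa using ((tendsto_gumbelKernel_zero_atBot hβ).comp hsub).const_mul (-β⁻¹)
  refine ⟨integrableOn_Ioi_deriv_of_nonneg' hderiv hnonneg hlim, ?_⟩
  rw [integral_Ioi_of_hasDerivAt_of_nonneg' hderiv hnonneg hlim]
  simp

lemma integral_Ioi_exp_mul_gumbelKernel_sub {β : ℝ} (hβ : 0 < β) (γ t : ℝ) :
    IntegrableOn (fun z => exp (-γ * z) * gumbelKernel β (β + γ) (t - z)) (Ioi 0) ∧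
    ∫ z in Ioi 0, exp (-γ * z) * gumbelKernel β (β + γ) (t - z) = β⁻¹ * gumbelKernel β γ t := by
  have hfactor : ∀ z, exp (-γ * z) * gumbelKernel β (β + γ) (t - z)
      = exp (-γ * t) * gumbelKernel β β (t - z) := fun z => by
    rw [← exp_mul_gumbelKernel, ← mul_assoc, ← exp_add]; ring_nf
  obtain ⟨hint, hval⟩ := integral_Ioi_gumbelKernel_self_sub hβ t
  simp_rw [hfactor]
  refine ⟨hint.const_mul _, ?_⟩
  rw [integral_const_mul, hval, mul_left_comm, exp_mul_gumbelKernel, zero_add]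

lemma integral_gumbelKernel_sub_mul_exp {β γ : ℝ} (hβ : 0 < β) (hγ : 0 < γ + β) (m : ℝ) :
    Integrable (fun y => gumbelKernel β γ (y - m) * exp (-β * y)) ∧
    ∫ y, gumbelKernel β γ (y - m) * exp (-β * y) = exp (-β * m) * (Gamma (1 + γ / β) / β) := by
  have hshift : ∀ y, gumbelKernel β γ (y - m) * exp (-β * y)
      = exp (-β * m) * gumbelKernel β (γ + β) (y - m) := fun y => by
    rw [← exp_mul_gumbelKernel, mul_comm, ← mul_assoc, ← exp_add]; ring_nf
  obtain ⟨hint, hval⟩ := integral_gumbelKernel hβ hγ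
  simp_rw [hshift]
  refine ⟨(hint.comp_sub_right m).const_mul _, ?_⟩
  rw [integral_const_mul, integral_sub_right_eq_self (gumbelKernel β (γ + β)), hval, add_div,
    div_self hβ.ne', add_comm]

lemma integrableOn_Ioi_affine_mul_exp_neg (a b : ℝ) {γ : ℝ} (hγ : 0 < γ) :
    IntegrableOn (fun z => (a + b * z) * exp (-γ * z)) (Ioi 0) := by
  have hz : IntegrableOn (fun z : ℝ => z * exp (-γ * z)) (Ioi 0) := by
    simpa using integrableOn_rpow_mul_exp_neg_mul_rpow (s := 1) (p := 1) (by norm_num)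
      (by norm_num) hγ
  refine (((exp_neg_integrableOn_Ioi 0 hγ).const_mul a).add (hz.const_mul b)).congr
    (Eventually.of_forall fun z => ?_)
  simp only [Pi.add_apply]; ring

lemma tendsto_affine_mul_exp_neg (a b : ℝ) {γ : ℝ} (hγ : 0 < γ) :
    Tendsto (fun z => (a + b * z) * exp (-γ * z)) atTop (𝓝 0) := by
  have hexp : Tendsto (fun z => exp (-γ * z)) atTop (𝓝 0) := by
    simpa using tendsto_rpow_mul_exp_neg_mul_atTop_nhds_zero 0 γ hγ
  have hz : Tendsto (fun z => z * exp (-γ * z)) atTop (𝓝 0) := by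
    simpa using tendsto_rpow_mul_exp_neg_mul_atTop_nhds_zero 1 γ hγ
  simpa only [add_mul, mul_assoc, mul_zero, add_zero] using
    (hexp.const_mul a).add (hz.const_mul b)

lemma integral_Ioi_comp_add_mul_exp_sub_eq_integral_deriv {f : ℝ → ℝ} {C γ : ℝ} (hγ : 0 < γ)
    (hf : Differentiable ℝ f) (hf' : ∀ x, |deriv f x| ≤ C) (y : ℝ) :
    (∫ z in Ioi 0, f (y + z) * (γ * exp (-γ * z))) - f y
      = ∫ z in Ioi 0, deriv f (y + z) * exp (-γ * z) := by
  have hgrowth : ∀ z, 0 ≤ z → |f (y + z) * exp (-γ * z)| ≤ (|f y| + C * z) * exp (-γ * z) := by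
    intro z hz
    have hlip := Convex.norm_image_sub_le_of_norm_deriv_le (fun x _ => hf x) (fun x _ => hf' x)
      convex_univ (mem_univ y) (mem_univ (y + z))
    rw [abs_mul, abs_of_pos (exp_pos _)]
    gcongr
    simp only [Real.norm_eq_abs, add_sub_cancel_left, abs_of_nonneg hz] at hlip
    linarith [abs_sub_abs_le_abs_sub (f (y + z)) (f y)]
  have hint : IntegrableOn (fun z => f (y + z) * (γ * exp (-γ * z))) (Ioi 0) := by
    refine ((integrableOn_Ioi_affine_mul_exp_neg (|f y|) C hγ).const_mul γ).mono'
      ((hf.continuous.comp (continuous_const_add y)).mul (by fun_prop)).aestronglyMeasurable ?_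
    filter_upwards [ae_restrict_mem measurableSet_Ioi] with z hz
    rw [norm_eq_abs, mul_left_comm, abs_mul, abs_of_pos hγ]
    exact mul_le_mul_of_nonneg_left (hgrowth z hz.le) hγ.le
  have hint' : IntegrableOn (fun z => deriv f (y + z) * exp (-γ * z)) (Ioi 0) :=
    (exp_neg_integrableOn_Ioi 0 hγ).bdd_mul
      ((measurable_deriv f).comp (measurable_const_add y)).aestronglyMeasurable
      (Eventually.of_forall fun z => hf' (y + z))
  have hderiv : ∀ z ∈ Ici (0 : ℝ), HasDerivAt (fun z => -(f (y + z) * exp (-γ * z)))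
      (f (y + z) * (γ * exp (-γ * z)) - deriv f (y + z) * exp (-γ * z)) z := by
    intro z _
    have hexp := ((hasDerivAt_id z).const_mul (-γ)).exp
    refine (((hf (y + z)).hasDerivAt.comp_const_add y z).mul hexp).fun_neg.congr_deriv ?_
    simp only [id]; ring
  have hlim : Tendsto (fun z => -(f (y + z) * exp (-γ * z))) atTop (𝓝 0) := by
    refine squeeze_zero_norm' ?_ (tendsto_affine_mul_exp_neg (|f y|) C hγ)
    filter_upwards [eventually_ge_atTop 0] with z hz
    rw [norm_neg]
    exact hgrowth z hz
  have := integral_Ioi_of_hasDerivAt_of_tendsto' hderiv (hint.sub hint') hlim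
  rw [integral_sub hint hint'] at this
  simp only [add_zero, mul_zero, exp_zero, mul_one, zero_sub, neg_neg] at this
  linarith

lemma integral_mul_integral_comp_add {μ : Measure ℝ} [SFinite μ] {w h k : ℝ → ℝ} {C : ℝ}
    (hw : Integrable w) (hk : Integrable k μ) (hh : AEStronglyMeasurable h) (hC : ∀ x, |h x| ≤ C) :
    Integrable (fun y => w y * ∫ z, h (y + z) * k z ∂μ) ∧
    ∫ y, w y * ∫ z, h (y + z) * k z ∂μ = ∫ x, h x * ∫ z, k z * w (x - z) ∂μ := by
  set F : ℝ × ℝ → ℝ := fun p => k p.1 * (w p.2 * h (p.1 + p.2))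
  set Φ : ℝ × ℝ → ℝ := fun p => k p.1 * (w (p.2 - p.1) * h p.2)
  have hshear := measurePreserving_prod_add μ (volume : Measure ℝ)
  have hemb : MeasurableEmbedding fun p : ℝ × ℝ => (p.1, p.1 + p.2) :=
    (MeasurableEquiv.shearAddRight ℝ).measurableEmbedding
  have hΦF : Φ ∘ (fun p : ℝ × ℝ => (p.1, p.1 + p.2)) = F := by
    ext p; simp [Φ, F]
  have hF : Integrable F (μ.prod volume) := by
    refine ((hk.mul_prod hw).norm.const_mul C).mono' ?_ (Eventually.of_forall fun p => ?_)
    · exact hk.aestronglyMeasurable.comp_fst.mul (hw.aestronglyMeasurable.comp_snd.mul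
        (hh.comp_quasiMeasurePreserving (quasiMeasurePreserving_add μ volume)))
    · simp only [F, norm_mul, Real.norm_eq_abs]
      rw [← mul_assoc, mul_comm C]
      exact mul_le_mul_of_nonneg_left (hC _) (by positivity)
  have hΦ : Integrable Φ (μ.prod volume) := by
    rwa [← hshear.integrable_comp_emb hemb, hΦF]
  have hinner : ∀ y, ∫ z, F (z, y) ∂μ = w y * ∫ z, h (y + z) * k z ∂μ := fun y => by
    rw [← integral_const_mul]; congr 1 with z; simp only [F]; rw [add_comm]; ring
  refine ⟨hF.integral_prod_right.congr (Eventually.of_forall hinner), ?_⟩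
  calc ∫ y, w y * ∫ z, h (y + z) * k z ∂μ = ∫ p, F p ∂(μ.prod volume) := by
        simp_rw [← hinner]; exact (integral_prod_symm F hF).symm
    _ = ∫ p, Φ p ∂(μ.prod volume) := by
        rw [← hΦF]; exact hshear.integral_comp hemb Φ
    _ = ∫ x, h x * ∫ z, k z * w (x - z) ∂μ := by
        rw [integral_prod_symm Φ hΦ]
        congr 1 with x; rw [← integral_const_mul]; congr 1 with z; simp only [Φ]; ring

lemma integral_gumbelKernel_sub_mul_integral_Ioi_mul_exp {β γ C : ℝ} (hβ : 0 < β)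
    (hγ : 0 < γ) (m : ℝ) {h : ℝ → ℝ} (hh : AEStronglyMeasurable h) (hC : ∀ x, |h x| ≤ C) :
    Integrable (fun y => gumbelKernel β γ (y - m) *
      ((∫ z in Ioi 0, h (y + z) * exp (-γ * z)) * exp (-β * y))) ∧
    ∫ y, gumbelKernel β γ (y - m) * ((∫ z in Ioi 0, h (y + z) * exp (-γ * z)) * exp (-β * y))
      = β⁻¹ * exp (-β * m) * ∫ x, gumbelKernel β γ (x - m) * h x := by
  have hconv : ∀ x, ∫ z in Ioi 0, exp (-γ * z) * (gumbelKernel β γ (x - z - m) * exp (-β * (x - z)))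
      = β⁻¹ * exp (-β * m) * gumbelKernel β γ (x - m) := fun x => by
    have hshift : ∀ z, exp (-γ * z) * (gumbelKernel β γ (x - z - m) * exp (-β * (x - z)))
        = exp (-β * m) * (exp (-γ * z) * gumbelKernel β (β + γ) (x - m - z)) := fun z => by
      simp only [gumbelKernel, ← exp_add]; ring_nf
    simp_rw [hshift]
    rw [integral_const_mul, (integral_Ioi_exp_mul_gumbelKernel_sub hβ γ (x - m)).2]
    ring
  have hrw : ∀ y, gumbelKernel β γ (y - m) * ((∫ z in Ioi 0, h (y + z) * exp (-γ * z)) *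
      exp (-β * y)) = gumbelKernel β γ (y - m) * exp (-β * y) *
        ∫ z in Ioi 0, h (y + z) * exp (-γ * z) := fun y => by ring
  obtain ⟨hint, heq⟩ := integral_mul_integral_comp_add (μ := volume.restrict (Ioi 0))
    (integral_gumbelKernel_sub_mul_exp hβ (add_pos hγ hβ) m).1 (exp_neg_integrableOn_Ioi 0 hγ)
    hh hC
  simp_rw [hrw]
  refine ⟨hint, heq.trans ?_⟩
  rw [← integral_const_mul]
  congr 1 with x
  rw [hconv]; ring

lemma integrable_withDensity_ofReal_iff {α : Type*} [MeasurableSpace α] {μ : Measure α}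
    {ρ : α → ℝ} (hρ : Measurable ρ) (hρ0 : 0 ≤ᵐ[μ] ρ) {h : α → ℝ} :
    Integrable h (μ.withDensity fun x => ENNReal.ofReal (ρ x)) ↔
      Integrable (fun x => ρ x * h x) μ := by
  rw [integrable_withDensity_iff_integrable_smul' hρ.ennreal_ofReal
    (ae_of_all _ fun _ => ENNReal.ofReal_lt_top)]
  refine integrable_congr ?_
  filter_upwards [hρ0] with x hx
  rw [ENNReal.toReal_ofReal hx, smul_eq_mul]

lemma integral_withDensity_ofReal {α : Type*} [MeasurableSpace α] {μ : Measure α}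
    {ρ : α → ℝ} (hρ : Measurable ρ) (hρ0 : 0 ≤ᵐ[μ] ρ) (h : α → ℝ) :
    ∫ x, h x ∂μ.withDensity (fun x => ENNReal.ofReal (ρ x)) = ∫ x, ρ x * h x ∂μ := by
  rw [integral_withDensity_eq_integral_toReal_smul hρ.ennreal_ofReal
    (ae_of_all _ fun _ => ENNReal.ofReal_lt_top)]
  refine integral_congr_ae ?_
  filter_upwards [hρ0] with x hx
  rw [ENNReal.toReal_ofReal hx, smul_eq_mul]

theorem nustar_fixed_point_general
    (β γ : ℝ) (hβ : 0 < β) (hβγ : β ≤ γ)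
    (Ψ : ℝ → ℝ)
    (ν : Measure ℝ)
    (hν : ν = volume.withDensity (fun x => ENNReal.ofReal
      ((γ / Real.Gamma (1 + γ / β)) * Real.exp
        (-γ * (x - β⁻¹ * Ψ (γ / β)) - Real.exp (-β * (x - β⁻¹ * Ψ (γ / β)))))))
    (g : (ℝ → ℝ) → ℝ → ℝ)
    (hg : ∀ f x, g f x = (∫ z in Set.Ioi (0:ℝ), f (x + z) * (γ * Real.exp (-γ * z))) - f x)
    (f : ℝ → ℝ) (hf : ContDiff ℝ 1 f) (hf' : ∀ x, |deriv f x| ≤ 1) :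
    Integrable (fun y => g f y * Real.exp (-β * y)) ν ∧
    Integrable (fun y => Real.exp (-β * y)) ν ∧
    Integrable (deriv f) ν ∧
    (∫ y, g f y * Real.exp (-β * y) ∂ν)
      = γ⁻¹ * (∫ y, Real.exp (-β * y) ∂ν) * (∫ y, deriv f y ∂ν) := by
  have hγ : 0 < γ := hβ.trans_le hβγ
  set m := β⁻¹ * Ψ (γ / β)
  set c := γ / Gamma (1 + γ / β)
  have hc : c * Gamma (1 + γ / β) = γ := div_mul_cancel₀ _ (Gamma_pos_of_pos (by positivity)).ne'
  replace hν : ν = volume.withDensity fun x => ENNReal.ofReal (c * gumbelKernel β γ (x - m)) := hν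
  have hρ : Measurable fun x => c * gumbelKernel β γ (x - m) := by fun_prop
  have hρ0 : 0 ≤ᵐ[volume] fun x => c * gumbelKernel β γ (x - m) :=
    ae_of_all _ fun x => mul_nonneg (by positivity) (gumbelKernel_pos _ _ _).le
  have hgf : ∀ y, g f y = ∫ z in Ioi 0, deriv f (y + z) * exp (-γ * z) := fun y => by
    rw [hg, integral_Ioi_comp_add_mul_exp_sub_eq_integral_deriv hγ
      (hf.differentiable one_ne_zero) hf' y]
  have hf'meas := (measurable_deriv f).aestronglyMeasurable (μ := volume)
  obtain ⟨hLint, hL⟩ := integral_gumbelKernel_sub_mul_integral_Ioi_mul_exp hβ hγ m hf'meas hf'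
  obtain ⟨hwint, hw⟩ := integral_gumbelKernel_sub_mul_exp hβ (add_pos hγ hβ) m
  have hf'int : Integrable fun x => gumbelKernel β γ (x - m) * deriv f x :=
    ((integral_gumbelKernel hβ hγ).1.comp_sub_right m).mul_bdd hf'meas (ae_of_all _ hf')
  simp only [hν, integrable_withDensity_ofReal_iff hρ hρ0, integral_withDensity_ofReal hρ hρ0,
    hgf, mul_assoc, integral_const_mul]
  refine ⟨hLint.const_mul c, hwint.const_mul c, hf'int.const_mul c, ?_⟩
  have hcγ : γ⁻¹ * c * Gamma (1 + γ / β) = 1 := by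
    rw [mul_assoc, hc, inv_mul_cancel₀ hγ.ne']
  rw [hL, hw]
  linear_combination (-c * β⁻¹ * exp (-β * m) * ∫ x, gumbelKernel β γ (x - m) * deriv f x) * hcγ

/-- The Gumbel-type measure `ν*` is a fixed point of the centered McKean-Vlasov
equation: for every `C¹` function `f` with `|f'| ≤ 1`,
`∫ g_f(y) e^{-βy} ν*(dy) = γ⁻¹ (∫ e^{-βy} ν*(dy)) (∫ f'(y) ν*(dy))`. -/
theorem nustar_fixed_point
    (β γ : ℝ) (hβ : 0 < β) (hβγ : β ≤ γ)
    (Ψ : ℝ → ℝ) (hΨ : ∀ a, Ψ a = deriv Real.Gamma a / Real.Gamma a)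
    (ν : Measure ℝ)
    (hν : ν = volume.withDensity (fun x => ENNReal.ofReal
      ((γ / Real.Gamma (1 + γ / β)) * Real.exp
        (-γ * (x - β⁻¹ * Ψ (γ / β)) - Real.exp (-β * (x - β⁻¹ * Ψ (γ / β)))))))
    (g : (ℝ → ℝ) → ℝ → ℝ)
    (hg : ∀ f x, g f x = (∫ z in Set.Ioi (0:ℝ), f (x + z) * (γ * Real.exp (-γ * z))) - f x)
    (f : ℝ → ℝ) (hf : ContDiff ℝ 1 f) (hf' : ∀ x, |deriv f x| ≤ 1) :
    Integrable (fun y => g f y * Real.exp (-β * y)) ν ∧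
    Integrable (fun y => Real.exp (-β * y)) ν ∧
    Integrable (deriv f) ν ∧
    (∫ y, g f y * Real.exp (-β * y) ∂ν)
      = γ⁻¹ * (∫ y, Real.exp (-β * y) ∂ν) * (∫ y, deriv f y ∂ν) :=
  nustar_fixed_point_general β γ hβ hβγ Ψ ν hν g hg f hf hf'
end

section
/- Suppose m₁ := E[Z₁] ∈ (0,∞) and let K ∈ (0,∞) satisfy E[Z₁ · 1{Z₁ > K}] ≤ m₁/4. Then the first-passage times τ(x) := ξ(x) + 1 satisfy E[τ(x)] ≤ 2K/m₁ + 8Kx/m₁² + 1 for every x ≥ 0. -/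
open MeasureTheory ProbabilityTheory Set
open scoped ENNReal

/-!
Truncate the increments at `K`: `W k = min (Z k) K`. Along the renewal path the truncated
increments collected while `S k ≤ x` sum to at most `x + K`, and `W k` is independent of the
event `{S k ≤ x}`. Taking expectations (a Wald-type identity) gives
`E[min Z K] · ∑ₖ P(S k ≤ x) ≤ x + K`, while `E[τ x] ≤ ∑ₖ P(S k ≤ x)`. The tail assumption gives
`3 m₁ / 4 ≤ E[min Z K] ≤ K`, and the stated bound follows by arithmetic.
-/

lemma le_of_le_sSup_setOf_le {α : Type*} [Preorder α] {f : ℕ → α} (hf : Monotone f) {x : α}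
    (h0 : f 0 ≤ x) {k : ℕ} (hk : k ≤ sSup {j | f j ≤ x}) : f k ≤ x := by
  by_cases hbdd : BddAbove {j | f j ≤ x}
  · exact (hf hk).trans (Nat.sSup_mem ⟨0, h0⟩ hbdd)
  · obtain ⟨j, hj, hkj⟩ := not_bddAbove_iff.mp hbdd k
    exact (hf hkj.le).trans hj

lemma monotone_sum_range_of_nonneg {z : ℕ → ℝ} (hz : ∀ i, 0 ≤ z i) :
    Monotone fun n ↦ ∑ i ∈ Finset.range n, z i :=
  monotone_nat_of_le_succ fun n ↦ by
    simpa [Finset.sum_range_succ] using hz n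

lemma sum_ite_min_le_min {z : ℕ → ℝ} (hz : ∀ i, 0 ≤ z i) {x K : ℝ} (hxK : 0 ≤ x + K) (n : ℕ) :
    ∑ k ∈ Finset.range n, (if ∑ i ∈ Finset.range k, z i ≤ x then min (z k) K else 0)
      ≤ min (∑ i ∈ Finset.range n, z i) (x + K) := by
  induction n with
  | zero => simpa using hxK
  | succ n ih =>
    rw [Finset.sum_range_succ, Finset.sum_range_succ]
    split_ifs with hSn
    · have hsum := ih.trans (min_le_left _ _)
      exact le_min (by linarith [min_le_left (z n) K]) (by linarith [min_le_right (z n) K])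
    · rw [add_zero]
      exact ih.trans (min_le_min_right _ (le_add_of_nonneg_right (hz n)))

lemma lintegral_natCast_le_tsum_measure {Ω : Type*} [MeasurableSpace Ω] {μ : Measure Ω}
    {N : Ω → ℕ} {A : ℕ → Set Ω} (hA : ∀ k, MeasurableSet (A k))
    (hN : ∀ k ω, k < N ω → ω ∈ A k) :
    ∫⁻ ω, (N ω : ℝ≥0∞) ∂μ ≤ ∑' k, μ (A k) := by
  have hpointwise : ∀ ω, (N ω : ℝ≥0∞) ≤ ∑' k, (A k).indicator (fun _ ↦ 1) ω := fun ω ↦ by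
    calc (N ω : ℝ≥0∞) = ∑ k ∈ Finset.range (N ω), (A k).indicator (fun _ ↦ 1) ω := by
          rw [Finset.sum_congr rfl fun k hk ↦
            indicator_of_mem (hN k ω (Finset.mem_range.mp hk)) (fun _ ↦ (1 : ℝ≥0∞))]
          simp
      _ ≤ ∑' k, (A k).indicator (fun _ ↦ 1) ω := ENNReal.sum_le_tsum _
  calc ∫⁻ ω, (N ω : ℝ≥0∞) ∂μ ≤ ∫⁻ ω, ∑' k, (A k).indicator (fun _ ↦ 1) ω ∂μ :=
        lintegral_mono hpointwise
    _ = ∑' k, μ (A k) := by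
      rw [lintegral_tsum fun k ↦ (measurable_const.indicator (hA k)).aemeasurable]
      simp [lintegral_indicator (hA _)]

namespace ProbabilityTheory

lemma IndepFun.integral_indicator_preimage {Ω β : Type*} [MeasurableSpace Ω] [MeasurableSpace β]
    {μ : Measure Ω} {X : Ω → β} {Y : Ω → ℝ} (hXY : IndepFun X Y μ) (hX : Measurable X)
    (hY : AEStronglyMeasurable Y μ) {s : Set β} (hs : MeasurableSet s) :
    ∫ ω, (X ⁻¹' s).indicator Y ω ∂μ = μ.real (X ⁻¹' s) * ∫ ω, Y ω ∂μ := by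
  have hind : (X ⁻¹' s).indicator Y = (s.indicator (1 : β → ℝ) ∘ X) * Y := by
    ext ω
    by_cases hω : X ω ∈ s <;> simp [hω]
  have hindep : IndepFun (s.indicator (1 : β → ℝ) ∘ X) Y μ :=
    hXY.comp (measurable_one.indicator hs) measurable_id
  rw [hind, hindep.integral_mul_eq_mul_integral
    ((measurable_one.indicator hs).comp hX).aestronglyMeasurable hY,
    ← integral_indicator_one (hX hs)]
  rfl

end ProbabilityTheory

section Renewal

variable {Ω : Type*} [MeasurableSpace Ω] {μ : Measure Ω} [IsProbabilityMeasure μ]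
  {Z : ℕ → Ω → ℝ}

lemma integral_min_mul_sum_measureReal_le (hmeas : ∀ i, Measurable (Z i))
    (hindep : iIndepFun Z μ) (hident : ∀ i, IdentDistrib (Z i) (Z 0) μ μ)
    (hnonneg : ∀ i ω, 0 ≤ Z i ω) {x K : ℝ} (hxK : 0 ≤ x + K) (n : ℕ) :
    (∫ ω, min (Z 0 ω) K ∂μ) * ∑ k ∈ Finset.range n, μ.real {ω | ∑ i ∈ Finset.range k, Z i ω ≤ x}
      ≤ x + K := by
  set A : ℕ → Set Ω := fun k ↦ {ω | ∑ i ∈ Finset.range k, Z i ω ≤ x}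
  set W : ℕ → Ω → ℝ := fun k ω ↦ min (Z k ω) K
  have hA : ∀ k, A k = (∑ i ∈ Finset.range k, Z i) ⁻¹' Iic x := fun k ↦ by ext; simp [A]
  have hSmeas : ∀ k, Measurable (∑ i ∈ Finset.range k, Z i) := fun k ↦ by
    rw [Finset.sum_fn]
    exact Finset.measurable_sum _ fun i _ ↦ hmeas i
  have hW : ∀ k, Integrable (W k) μ := fun k ↦
    Integrable.of_bound ((hmeas k).min measurable_const).aestronglyMeasurable |K|
      (ae_of_all _ fun ω ↦ abs_le.mpr
        ⟨le_min ((neg_nonpos.mpr (abs_nonneg K)).trans (hnonneg k ω)) (neg_abs_le K),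
          (min_le_right _ _).trans (le_abs_self K)⟩)
  have hterm : ∀ k, ∫ ω, (A k).indicator (W k) ω ∂μ = μ.real (A k) * ∫ ω, W 0 ω ∂μ := fun k ↦ by
    have hindep_k : IndepFun (∑ i ∈ Finset.range k, Z i) (W k) μ :=
      (hindep.indepFun_finsetSum_of_notMem hmeas Finset.notMem_range_self).comp
        measurable_id (measurable_id.min measurable_const)
    rw [hA, hindep_k.integral_indicator_preimage (hSmeas k)
      (hW k).aestronglyMeasurable measurableSet_Iic]
    exact congrArg _ ((hident k).comp (measurable_id.min measurable_const)).integral_eq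
  have hint : ∀ k, Integrable ((A k).indicator (W k)) μ := fun k ↦
    (hW k).indicator (hA k ▸ measurableSet_Iic.preimage (hSmeas k))
  calc (∫ ω, W 0 ω ∂μ) * ∑ k ∈ Finset.range n, μ.real (A k)
      = ∫ ω, ∑ k ∈ Finset.range n, (A k).indicator (W k) ω ∂μ := by
        rw [integral_finsetSum _ fun k _ ↦ hint k, Finset.mul_sum]
        simp only [hterm, mul_comm]
    _ ≤ ∫ _ω, x + K ∂μ := integral_mono (integrable_finsetSum _ fun k _ ↦ hint k)
        (integrable_const _) fun ω ↦ by
          simpa only [A, W, indicator_apply, mem_ofPred_eq] using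
            (sum_ite_min_le_min (hnonneg · ω) hxK n).trans (min_le_right _ _)
    _ = x + K := by simp

lemma tsum_measure_sum_range_le (hmeas : ∀ i, Measurable (Z i))
    (hindep : iIndepFun Z μ) (hident : ∀ i, IdentDistrib (Z i) (Z 0) μ μ)
    (hnonneg : ∀ i ω, 0 ≤ Z i ω) {x K : ℝ} (hxK : 0 ≤ x + K)
    (hW : 0 < ∫ ω, min (Z 0 ω) K ∂μ) :
    ∑' k, μ {ω | ∑ i ∈ Finset.range k, Z i ω ≤ x}
      ≤ ENNReal.ofReal ((x + K) / ∫ ω, min (Z 0 ω) K ∂μ) :=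
  ENNReal.tsum_le_of_sum_range_le fun n ↦ by
    rw [← Finset.sum_congr rfl fun k _ ↦ ofReal_measureReal,
      ← ENNReal.ofReal_sum_of_nonneg fun k _ ↦ measureReal_nonneg]
    exact ENNReal.ofReal_le_ofReal <| (le_div_iff₀' hW).mpr <|
      integral_min_mul_sum_measureReal_le hmeas hindep hident hnonneg hxK n

end Renewal

lemma integral_sub_setIntegral_lt_le_integral_min {Ω : Type*} [MeasurableSpace Ω]
    {μ : Measure Ω} [IsFiniteMeasure μ] {f : Ω → ℝ} (hf : Integrable f μ) {K : ℝ} (hK : 0 ≤ K) :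
    ∫ ω, f ω ∂μ - ∫ ω in {ω | K < f ω}, f ω ∂μ ≤ ∫ ω, min (f ω) K ∂μ := by
  have hs : NullMeasurableSet {ω | K < f ω} μ :=
    nullMeasurableSet_lt aemeasurable_const hf.aemeasurable
  rw [← integral_indicator₀ hs, ← integral_sub hf (hf.indicator₀ hs)]
  refine integral_mono (hf.sub (hf.indicator₀ hs)) (hf.inf (integrable_const K)) fun ω ↦ ?_
  by_cases hω : K < f ω
  · simpa [indicator_of_mem (show ω ∈ {ω | K < f ω} from hω)] using ⟨hK.trans hω.le, hK⟩
  · simp [hω, le_of_not_gt hω]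

lemma add_div_le_of_three_quarters_le {m m' K x : ℝ} (hm : 0 < m) (hx : 0 ≤ x)
    (hlow : 3 * m / 4 ≤ m') (hup : m' ≤ K) :
    (x + K) / m' ≤ 2 * K / m + 8 * K * x / m ^ 2 + 1 := by
  have hm' : 0 < m' := by linarith
  have hK : K ≤ 2 * K / m * m' := by
    rw [div_mul_eq_mul_div, le_div_iff₀ hm]; nlinarith
  have hx' : x ≤ 8 * K * x / m ^ 2 * m' := by
    have : m ^ 2 ≤ 8 * K * m' := by nlinarith
    rw [div_mul_eq_mul_div, le_div_iff₀ (by positivity)]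
    nlinarith [mul_le_mul_of_nonneg_left this hx]
  rw [div_le_iff₀ hm', add_mul, add_mul, one_mul]
  linarith

/-- for i.i.d. strictly positive `Z i` with mean `m₁ ∈ (0,∞)` and `K` with
`E[Z₁ 1{Z₁ > K}] ≤ m₁/4`, the first-passage times `τ(x) = ξ(x) + 1` of the renewal process
satisfy `E[τ(x)] ≤ 2K/m₁ + 8Kx/m₁² + 1` for every `x ≥ 0`. -/
theorem renewal_first_passage_mean_bound
    {Ω : Type*} [MeasurableSpace Ω] (μ : Measure Ω) [IsProbabilityMeasure μ]
    (Z : ℕ → Ω → ℝ)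
    (hmeas : ∀ i, Measurable (Z i))
    (hindep : iIndepFun Z μ)
    (hident : ∀ i, IdentDistrib (Z i) (Z 0) μ μ)
    (hpos : ∀ i ω, 0 < Z i ω)
    (hint : Integrable (Z 0) μ)
    (m₁ : ℝ) (hm₁ : m₁ = ∫ ω, Z 0 ω ∂μ) (hm₁pos : 0 < m₁)
    (K : ℝ) (hK : 0 < K)
    (hKbig : (∫ ω in {ω | K < Z 0 ω}, Z 0 ω ∂μ) ≤ m₁ / 4)
    (S : ℕ → Ω → ℝ) (hS : ∀ k ω, S k ω = ∑ i ∈ Finset.range k, Z i ω)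
    (ξ : ℝ → Ω → ℕ) (hξ : ∀ t ω, ξ t ω = sSup {k : ℕ | S k ω ≤ t})
    (τ : ℝ → Ω → ℕ) (hτ : ∀ x ω, τ x ω = ξ x ω + 1)
    (x : ℝ) (hx : 0 ≤ x) :
    (∫⁻ ω, (τ x ω : ℝ≥0∞) ∂μ)
      ≤ ENNReal.ofReal (2 * K / m₁ + 8 * K * x / m₁ ^ 2 + 1) := by
  obtain rfl : τ = fun x ω ↦ ξ x ω + 1 := funext₂ hτ
  obtain rfl : ξ = fun t ω ↦ sSup {k : ℕ | S k ω ≤ t} := funext₂ hξ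
  obtain rfl : S = fun k ω ↦ ∑ i ∈ Finset.range k, Z i ω := funext₂ hS
  have hnonneg : ∀ i ω, 0 ≤ Z i ω := fun i ω ↦ (hpos i ω).le
  have hlow : 3 * m₁ / 4 ≤ ∫ ω, min (Z 0 ω) K ∂μ := by
    linarith [integral_sub_setIntegral_lt_le_integral_min hint hK.le (μ := μ)]
  have hup : ∫ ω, min (Z 0 ω) K ∂μ ≤ K := by
    simpa using integral_mono (hint.inf (integrable_const K)) (integrable_const K)
      fun ω ↦ min_le_right (Z 0 ω) K
  calc ∫⁻ ω, ((sSup {k | ∑ i ∈ Finset.range k, Z i ω ≤ x} + 1 : ℕ) : ℝ≥0∞) ∂μ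
      ≤ ∑' k, μ {ω | ∑ i ∈ Finset.range k, Z i ω ≤ x} :=
        lintegral_natCast_le_tsum_measure
          (fun k ↦ measurableSet_le (Finset.measurable_sum _ fun i _ ↦ hmeas i) measurable_const)
          fun k ω hk ↦ le_of_le_sSup_setOf_le (monotone_sum_range_of_nonneg (hnonneg · ω))
            (by simpa using hx) (Nat.lt_succ_iff.mp hk)
    _ ≤ ENNReal.ofReal ((x + K) / ∫ ω, min (Z 0 ω) K ∂μ) :=
        tsum_measure_sum_range_le hmeas hindep hident hnonneg (by linarith) (by linarith)
    _ ≤ ENNReal.ofReal (2 * K / m₁ + 8 * K * x / m₁ ^ 2 + 1) :=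
        ENNReal.ofReal_le_ofReal (add_div_le_of_three_quarters_le hm₁pos hx hlow hup)
end

section
/- Suppose (a) for every c > 0, limsup_{x→−∞} w(x−c)/w(x) < ∞, and (b) limsup_{n→∞} E[ ∫ |x|(1 + w(x)) μ_n(dx) ] < ∞. Then for every ε > 0 and c > 0: lim_{A→∞} limsup_{n→∞} P[ ∫_{(−∞,−A)} w(x−c) μ_n(dx) ≥ ε ] = 0. -/
/-!
Far to the left, (a) gives `w (x - c) ≤ M * w x`, and on `(-∞, -A)` the factor `|x| / A` is at
least `1`; hence `∫_{(-∞,-A)} w (x - c) dμₙ ≤ (M / A) ∫ |x| (1 + w x) dμₙ`. Markov's inequality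
turns this into `P[… ≥ ε] ≤ M / (A ε) · E[∫ |x| (1 + w x) dμₙ]`, whose limsup in `n` is finite
by (b) and so vanishes as `A → ∞`.
-/

open MeasureTheory Filter Set
open scoped ENNReal

theorem nonneg_and_eventually_le_mul_of_eventually_div_le {α : Type*} {l : Filter α} [l.NeBot]
    {f g : α → ℝ} {M : ℝ} (hf : ∀ x, 0 < f x) (hg : ∀ x, 0 < g x)
    (h : ∀ᶠ x in l, f x / g x ≤ M) : 0 ≤ M ∧ ∀ᶠ x in l, f x ≤ M * g x := by
  obtain ⟨x, hx⟩ := h.exists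
  refine ⟨(div_pos (hf x) (hg x)).le.trans hx, ?_⟩
  filter_upwards [h] with y hy
  exact (div_le_iff₀ (hg y)).1 hy

theorem mul_le_div_mul_abs_mul_of_lt_neg {A M w x : ℝ} (hA : 0 < A) (hM : 0 ≤ M) (hw : 0 ≤ w)
    (hx : x < -A) : M * w ≤ M / A * (|x| * w) := by
  have hxA : 1 ≤ |x| / A := by
    rw [le_div_iff₀ hA, one_mul, abs_of_neg (by linarith)]
    linarith
  calc M * w = M * 1 * w := by ring
    _ ≤ M * (|x| / A) * w := by gcongr
    _ = M / A * (|x| * w) := by ring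

theorem setLIntegral_Iio_neg_le_div_mul_lintegral_abs_mul {μ : Measure ℝ} {g w : ℝ → ℝ}
    {A M : ℝ} (hA : 0 < A) (hM : 0 ≤ M) (hw : ∀ x, 0 ≤ w x) (hgw : ∀ x < -A, g x ≤ M * w x) :
    ∫⁻ x in Iio (-A), ENNReal.ofReal (g x) ∂μ
      ≤ ENNReal.ofReal (M / A) * ∫⁻ x, ENNReal.ofReal (|x| * w x) ∂μ :=
  calc ∫⁻ x in Iio (-A), ENNReal.ofReal (g x) ∂μ
      ≤ ∫⁻ x in Iio (-A), ENNReal.ofReal (M / A) * ENNReal.ofReal (|x| * w x) ∂μ := by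
        refine setLIntegral_mono' measurableSet_Iio fun x hx => ?_
        rw [← ENNReal.ofReal_mul (div_nonneg hM hA.le)]
        exact ENNReal.ofReal_le_ofReal
          ((hgw x hx).trans (mul_le_div_mul_abs_mul_of_lt_neg hA hM (hw x) hx))
    _ ≤ ∫⁻ x, ENNReal.ofReal (M / A) * ENNReal.ofReal (|x| * w x) ∂μ :=
        setLIntegral_le_lintegral _ _
    _ = ENNReal.ofReal (M / A) * ∫⁻ x, ENNReal.ofReal (|x| * w x) ∂μ :=
        lintegral_const_mul' _ _ ENNReal.ofReal_ne_top

theorem limsup_meas_ge_le_of_le_mul {ι Ω : Type*} [MeasurableSpace Ω] {P : Measure Ω}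
    {l : Filter ι} {X Y : ι → Ω → ℝ≥0∞} {k ε : ℝ≥0∞} (hX : ∀ i, Measurable (X i))
    (hXY : ∀ i ω, X i ω ≤ k * Y i ω) (hk : k ≠ ⊤) (hε₀ : ε ≠ 0) (hε : ε ≠ ⊤) :
    limsup (fun i => P {ω | ε ≤ X i ω}) l ≤ k * (limsup (fun i => ∫⁻ ω, Y i ω ∂P) l / ε) := by
  have markov (i : ι) : P {ω | ε ≤ X i ω} ≤ k * ((∫⁻ ω, Y i ω ∂P) / ε) :=
    calc P {ω | ε ≤ X i ω} ≤ (∫⁻ ω, X i ω ∂P) / ε :=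
          meas_ge_le_lintegral_div (hX i).aemeasurable hε₀ hε
      _ ≤ (∫⁻ ω, k * Y i ω ∂P) / ε := by gcongr; exact hXY i _
      _ = k * ((∫⁻ ω, Y i ω ∂P) / ε) := by rw [lintegral_const_mul' _ _ hk, mul_div_assoc]
  calc limsup (fun i => P {ω | ε ≤ X i ω}) l
      ≤ limsup (fun i => k * ((∫⁻ ω, Y i ω ∂P) * ε⁻¹)) l :=
        limsup_le_limsup (Eventually.of_forall markov)
    _ = k * (limsup (fun i => ∫⁻ ω, Y i ω ∂P) l / ε) := by
        rw [ENNReal.limsup_const_mul_of_ne_top hk,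
          ENNReal.limsup_mul_const_of_ne_top (ENNReal.inv_ne_top.2 hε₀), mul_comm ε⁻¹,
          div_eq_mul_inv]

theorem measurable_setLIntegral_of_measurable {Ω α : Type*} [MeasurableSpace Ω]
    [MeasurableSpace α] {κ : Ω → Measure α} (hκ : Measurable κ) {f : α → ℝ≥0∞}
    (hf : Measurable f) {s : Set α} (hs : MeasurableSet s) :
    Measurable fun ω => ∫⁻ x in s, f x ∂κ ω := by
  simp_rw [← lintegral_indicator hs]
  exact (Measure.measurable_lintegral (hf.indicator hs)).comp hκ

theorem tendsto_ofReal_div_mul_atTop_zero (M : ℝ) {K : ℝ≥0∞} (hK : K ≠ ⊤) :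
    Tendsto (fun A : ℝ => ENNReal.ofReal (M / A) * K) atTop (nhds 0) := by
  have hMA : Tendsto (fun A : ℝ => ENNReal.ofReal (M / A)) atTop (nhds 0) := by
    simpa using ENNReal.tendsto_ofReal (tendsto_const_nhds.div_atTop tendsto_id)
  simpa using ENNReal.Tendsto.mul_const hMA (.inr hK)

theorem left_tail_condition_from_moment_bound_general
    {Ω : Type*} [MeasurableSpace Ω] (P : Measure Ω)
    (w : ℝ → ℝ) (hwpos : ∀ x, 0 < w x) (hwmono : Antitone w)
    (μn : ℕ → Ω → Measure ℝ)
    (hker : ∀ n, ∀ s : Set ℝ, MeasurableSet s → Measurable (fun ω => μn n ω s))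
    (ha : ∀ c > (0:ℝ), ∃ M : ℝ, ∀ᶠ x in atBot, w (x - c) / w x ≤ M)
    (hb : Filter.limsup (fun n =>
        ∫⁻ ω, (∫⁻ x, ENNReal.ofReal (|x| * (1 + w x)) ∂(μn n ω)) ∂P) atTop < ⊤)
    (ε c : ℝ) (hε : 0 < ε) (hc : 0 < c) :
    Tendsto (fun A : ℝ => Filter.limsup (fun n =>
        P {ω | ENNReal.ofReal ε
            ≤ ∫⁻ x in Set.Iio (-A), ENNReal.ofReal (w (x - c)) ∂(μn n ω)}) atTop)
      atTop (nhds 0) := by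
  have hε₀ : ENNReal.ofReal ε ≠ 0 := (ENNReal.ofReal_pos.2 hε).ne'
  obtain ⟨M, hM⟩ := ha c hc
  obtain ⟨hM₀, hshift⟩ :=
    nonneg_and_eventually_le_mul_of_eventually_div_le (fun x => hwpos (x - c)) hwpos hM
  obtain ⟨x₀, hx₀⟩ := eventually_atBot.1 hshift
  have hw_shift_meas : Measurable fun x => ENNReal.ofReal (w (x - c)) :=
    (hwmono.measurable.comp (measurable_sub_const c)).ennreal_ofReal
  refine tendsto_of_tendsto_of_tendsto_of_le_of_le' tendsto_const_nhds
    (tendsto_ofReal_div_mul_atTop_zero M (ENNReal.div_ne_top hb.ne hε₀))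
    (.of_forall fun _ => zero_le) ?_
  filter_upwards [eventually_gt_atTop 0, eventually_ge_atTop (-x₀)] with A hA hAx₀
  refine limsup_meas_ge_le_of_le_mul
    (fun n => measurable_setLIntegral_of_measurable
      (Measure.measurable_of_measurable_coe _ (hker n)) hw_shift_meas measurableSet_Iio)
    (fun n ω => setLIntegral_Iio_neg_le_div_mul_lintegral_abs_mul hA hM₀
      (fun x => by linarith [hwpos x]) fun x hx => ?_)
    ENNReal.ofReal_ne_top hε₀ ENNReal.ofReal_ne_top
  calc w (x - c) ≤ M * w x := hx₀ x (by linarith)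
    _ ≤ M * (1 + w x) := by gcongr; linarith

/-- Remark 2.4 of the paper: if (a) for every `c > 0` the ratio
`w(x-c)/w(x)` is bounded near `-∞`, and (b) the expectations
`E[∫ |x|(1+w(x)) μ_n(dx)]` are bounded along `n → ∞`, then for every `ε, c > 0`,
`lim_{A→∞} limsup_{n→∞} P[∫_{(-∞,-A)} w(x-c) μ_n(dx) ≥ ε] = 0`. -/
theorem left_tail_condition_from_moment_bound
    {Ω : Type*} [MeasurableSpace Ω] (P : Measure Ω) [IsProbabilityMeasure P]
    (w : ℝ → ℝ) (hwpos : ∀ x, 0 < w x) (hwmono : Antitone w)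
    (μn : ℕ → Ω → Measure ℝ)
    (hprob : ∀ n ω, IsProbabilityMeasure (μn n ω))
    (hker : ∀ n, ∀ s : Set ℝ, MeasurableSet s → Measurable (fun ω => μn n ω s))
    (ha : ∀ c > (0:ℝ), ∃ M : ℝ, ∀ᶠ x in atBot, w (x - c) / w x ≤ M)
    (hb : Filter.limsup (fun n =>
        ∫⁻ ω, (∫⁻ x, ENNReal.ofReal (|x| * (1 + w x)) ∂(μn n ω)) ∂P) atTop < ⊤)
    (ε c : ℝ) (hε : 0 < ε) (hc : 0 < c) :
    Tendsto (fun A : ℝ => Filter.limsup (fun n =>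
        P {ω | ENNReal.ofReal ε
            ≤ ∫⁻ x in Set.Iio (-A), ENNReal.ofReal (w (x - c)) ∂(μn n ω)}) atTop)
      atTop (nhds 0) :=
  left_tail_condition_from_moment_bound_general P w hwpos hwmono μn hker ha hb ε c hε hc
end

section
/- Let w : ℝ → (0,∞) be a nonincreasing function, let n ≥ 1 be an integer and y ∈ ℝⁿ with Σ_{i=1}^n y_i = 0. Let δ > 0 and B > 0 satisfy w(B) ≥ 2δ. If (1/n) Σ_{i=1}^n w(y_i) < δ, then (1/n) Σ_{i=1}^n |y_i| ≥ B. -/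
open Finset

/-!
Each entry with `y i ≤ B` contributes at least `w B ≥ 2δ` to a total rate below `nδ`, so at most
half of the entries lie at or below `B`. The others, a majority, exceed `B`, and because the
configuration is centered, `∑ |y i|` is at least twice their sum, hence at least `n B`.
-/

section

variable {ι : Type*}

theorem Antitone.card_filter_le_mul_le_sum {w : ℝ → ℝ} (hw : 0 ≤ w) (hwmono : Antitone w)
    (s : Finset ι) (y : ι → ℝ) (B : ℝ) :
    #{i ∈ s | y i ≤ B} * w B ≤ ∑ i ∈ s, w (y i) :=
  calc (#{i ∈ s | y i ≤ B} : ℝ) * w B = #{i ∈ s | y i ≤ B} • w B := (nsmul_eq_mul _ _).symm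
    _ ≤ ∑ i ∈ s with y i ≤ B, w (y i) :=
      card_nsmul_le_sum _ _ _ fun _ hi ↦ hwmono (mem_filter.mp hi).2
    _ ≤ ∑ i ∈ s, w (y i) := sum_le_sum_of_subset_of_nonneg (filter_subset _ s) fun _ _ _ ↦ hw _

theorem two_mul_sum_le_sum_abs_of_sum_eq_zero [DecidableEq ι] {s t : Finset ι} {y : ι → ℝ}
    (hsum : ∑ i ∈ s, y i = 0) (hts : t ⊆ s) :
    2 * ∑ i ∈ t, y i ≤ ∑ i ∈ s, |y i| := by
  rw [← sum_sdiff hts] at hsum ⊢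
  have hrest := abs_sum_le_sum_abs y (s \ t)
  have ht := abs_sum_le_sum_abs y t
  linarith [neg_abs_le (∑ i ∈ s \ t, y i), le_abs_self (∑ i ∈ t, y i)]

theorem card_mul_le_sum_abs_of_sum_eq_zero {s : Finset ι} {y : ι → ℝ}
    (hsum : ∑ i ∈ s, y i = 0) {B : ℝ} (hB : 0 ≤ B) (hfew : 2 * #{i ∈ s | y i ≤ B} ≤ #s) :
    #s * B ≤ ∑ i ∈ s, |y i| := by
  classical
  have hsplit := card_filter_add_card_filter_not (s := s) (p := fun i ↦ B < y i)
  simp only [not_lt] at hsplit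
  have hmaj : (#s : ℝ) ≤ 2 * #{i ∈ s | B < y i} := by exact_mod_cast (by omega)
  calc (#s : ℝ) * B ≤ 2 * (#{i ∈ s | B < y i} * B) :=
        (mul_le_mul_of_nonneg_right hmaj hB).trans_eq (mul_assoc _ _ _)
    _ ≤ 2 * ∑ i ∈ s with B < y i, y i := by
      gcongr
      simpa [nsmul_eq_mul] using card_nsmul_le_sum _ y B fun _ hi ↦ (mem_filter.mp hi).2.le
    _ ≤ ∑ i ∈ s, |y i| := two_mul_sum_le_sum_abs_of_sum_eq_zero hsum (filter_subset _ s)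

end

/-- for a centered configuration, if the average jump rate
`(1/n) Σ w(y_i)` is below `δ` and `w(B) ≥ 2δ`, then the average absolute
displacement `(1/n) Σ |y_i|` is at least `B`. -/
theorem small_average_rate_implies_spread
    (w : ℝ → ℝ) (hwpos : ∀ x, 0 < w x) (hwmono : Antitone w)
    (n : ℕ) (hn : 1 ≤ n)
    (y : Fin n → ℝ) (hsum : ∑ i, y i = 0)
    (δ B : ℝ) (hδ : 0 < δ) (hB : 0 < B) (hwB : 2 * δ ≤ w B)
    (havg : (1 / (n : ℝ)) * ∑ i, w (y i) < δ) :
    B ≤ (1 / (n : ℝ)) * ∑ i, |y i| := by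
  have hn0 : (0 : ℝ) < n := by exact_mod_cast hn
  rw [one_div, inv_mul_lt_iff₀ hn0] at havg
  rw [one_div, inv_mul_eq_div, le_div_iff₀ hn0]
  have hlow : (#{i | y i ≤ B} : ℝ) * (2 * δ) ≤ ∑ i, w (y i) :=
    (mul_le_mul_of_nonneg_left hwB (Nat.cast_nonneg _)).trans
      (hwmono.card_filter_le_mul_le_sum (fun x ↦ (hwpos x).le) univ y B)
  have hfew : 2 * #{i | y i ≤ B} ≤ #(univ : Finset (Fin n)) := by
    rw [card_univ, Fintype.card_fin]
    exact_mod_cast (show (2 * #{i | y i ≤ B} : ℝ) ≤ n by nlinarith)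
  simpa [mul_comm] using card_mul_le_sum_abs_of_sum_eq_zero hsum hB.le hfew
end
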